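/- Let z₁,…,z_l ∈ ℂ be distinct, let k₁,…,k_l ≥ 1 be integers, let α_{i,j} ∈ ℂ (1 ≤ i ≤ l, 1 ≤ j ≤ k_i), let g₀ be a complex polynomial, and let g be the rational function g(z) = g₀(z) + Σ_{i=1}^l R_i(z), where R_i(z) = Σ_{j=1}^{k_i} α_{i,j}/(z − z_i)^j is the essential (principal) part of g at z_i. Let γ : [0,1] → ℂ be a closed piecewise continuously differentiable curve whose image avoids z₁,…,z_l. Then for every t ∈ ℂ lying neither on the image of γ nor in {z₁,…,z_l}: I(γ,g,t) = μ(γ,t) g(t) − Σ_{i=1}^l μ(γ,z_i) R_i(t). -/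

import Mathlib

open MeasureTheory Set

/-- A curve `γ : ℝ → ℂ` (considered on `[0,1]`) is piecewise continuously differentiable
with (piecewise) derivative `γ'`. -/
def PiecewiseC1 (γ γ' : ℝ → ℂ) : Prop :=
  ContinuousOn γ (Set.Icc 0 1) ∧
  IntervalIntegrable γ' MeasureTheory.volume 0 1 ∧
  ∃ S : Finset ℝ,
    (∀ s ∈ Set.Icc (0:ℝ) 1 \ S, HasDerivWithinAt γ (γ' s) (Set.Icc 0 1) s) ∧
    ContinuousOn γ' (Set.Icc (0:ℝ) 1 \ S)

/-- The winding number of a closed curve `γ` around a point `w` not on its image. -/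
noncomputable def windingNumber (γ γ' : ℝ → ℂ) (w : ℂ) : ℂ :=
  (1 / (2 * Real.pi * Complex.I)) * ∫ s in (0:ℝ)..1, γ' s / (γ s - w)

/-- The Cauchy type integral `I(γ,g,t)`. -/
noncomputable def cauchyTypeIntegral (γ γ' : ℝ → ℂ) (g : ℂ → ℂ) (t : ℂ) : ℂ :=
  (1 / (2 * Real.pi * Complex.I)) * ∫ s in (0:ℝ)..1, g (γ s) * γ' s / (γ s - t)

/-!
Let `U` be the plane without `t` and the poles. The function
`h w = (g w - g t) / (w - t) + ∑ i, R i t / (w - z i)` has a primitive on `U`: the difference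
quotient of the polynomial part extends to an entire function, and by partial fractions
`(R i w - R i t) / (w - t) + R i t / (w - z i)` is a combination of the powers `(w - z i) ^ (-m)`
with `m ≥ 2`. Integrals of derivatives over closed curves vanish, so integrating
`g(γ) γ' / (γ - t) = h(γ) γ' + g t · γ' / (γ - t) - ∑ i, R i t · γ' / (γ - z i)`
leaves only winding numbers.
-/

namespace Complex.IsExactOn

variable {E : Type*} [NormedAddCommGroup E] [NormedSpace ℂ E] {f g : ℂ → E} {U V : Set ℂ}

theorem mono (hf : IsExactOn f V) (hUV : U ⊆ V) : IsExactOn f U :=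
  let ⟨F, hF⟩ := hf
  ⟨F, fun w hw => hF w (hUV hw)⟩

theorem congr (hf : IsExactOn f U) (hfg : EqOn f g U) : IsExactOn g U :=
  let ⟨F, hF⟩ := hf
  ⟨F, fun w hw => hfg hw ▸ hF w hw⟩

theorem add (hf : IsExactOn f U) (hg : IsExactOn g U) : IsExactOn (fun w => f w + g w) U :=
  let ⟨F, hF⟩ := hf
  let ⟨G, hG⟩ := hg
  ⟨F + G, fun w hw => (hF w hw).add (hG w hw)⟩

theorem const_smul (c : ℂ) (hf : IsExactOn f U) : IsExactOn (fun w => c • f w) U :=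
  let ⟨F, hF⟩ := hf
  ⟨c • F, fun w hw => (hF w hw).const_smul c⟩

theorem sum {ι : Type*} (s : Finset ι) {f : ι → ℂ → E} (hf : ∀ i ∈ s, IsExactOn (f i) U) :
    IsExactOn (fun w => ∑ i ∈ s, f i w) U := by
  induction s using Finset.cons_induction with
  | empty => exact ⟨0, fun w _ => by simp⟩
  | cons i s hi ih =>
    simp_rw [Finset.sum_cons]
    exact (hf i (Finset.mem_cons_self i s)).add
      (ih fun j hj => hf j (Finset.mem_cons_of_mem hj))

end Complex.IsExactOn

open Complex

theorem isExactOn_zpow_sub (a : ℂ) {n : ℤ} (hn : n ≠ -1) :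
    IsExactOn (fun w => (w - a) ^ n) {a}ᶜ := by
  have hn' : ((n + 1 : ℤ) : ℂ) ≠ 0 := by exact_mod_cast (by omega : n + 1 ≠ 0)
  refine ⟨fun w => ((n + 1 : ℤ) : ℂ)⁻¹ * (w - a) ^ (n + 1), fun w hw => ?_⟩
  have hwa : w - a ≠ 0 := sub_ne_zero.mpr hw
  have h := (hasDerivAt_zpow (n + 1) (w - a) (Or.inl hwa)).comp_sub_const w a
  refine (h.const_mul _).congr_deriv ?_
  rw [add_sub_cancel_right, inv_mul_cancel_left₀ hn']

theorem Differentiable.isExactOn_div_sub_sub {f : ℂ → ℂ} (hf : Differentiable ℂ f) (t : ℂ) :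
    IsExactOn (fun w => (f w - f t) / (w - t)) {t}ᶜ := by
  have hdslope : Differentiable ℂ (dslope f t) :=
    differentiableOn_univ.mp ((differentiableOn_dslope Filter.univ_mem).mpr hf.differentiableOn)
  refine (hdslope.isExactOn_univ.mono (subset_univ _)).congr fun w hw => ?_
  rw [dslope_of_ne f hw, slope_def_field]

theorem inv_pow_succ_mul_sub {K : Type*} [Field K] {u v : K} (hu : u ≠ 0) (hv : v ≠ 0)
    (huv : u - v ≠ 0) (n : ℕ) :
    (u ^ (n + 1) * (u - v))⁻¹ = (v ^ (n + 1) * (u - v))⁻¹ - (v ^ (n + 1) * u)⁻¹ -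
      ∑ m ∈ Finset.range n, (v ^ (n - m) * u ^ (m + 2))⁻¹ := by
  induction n with
  | zero => field_simp; ring
  | succ n ih =>
    have hstep : (u ^ (n + 2) * (u - v))⁻¹ = u⁻¹ * (u ^ (n + 1) * (u - v))⁻¹ := by
      rw [pow_succ]; field_simp
    rw [hstep, ih, Finset.sum_range_succ', Nat.sub_zero]
    have hterm : ∀ m ∈ Finset.range n, u⁻¹ * (v ^ (n - m) * u ^ (m + 2))⁻¹ =
        (v ^ (n + 1 - (m + 1)) * u ^ (m + 1 + 2))⁻¹ := fun m _ => by
      rw [Nat.add_sub_add_right]; field_simp; ring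
    rw [mul_sub, mul_sub, Finset.mul_sum, Finset.sum_congr rfl hterm]
    field_simp
    ring

theorem isExactOn_inv_pow_sub_mul_sub {a t : ℂ} (hta : t ≠ a) {j : ℕ} (hj : 1 ≤ j) :
    IsExactOn (fun w => ((w - a) ^ j * (w - t))⁻¹ - ((t - a) ^ j * (w - t))⁻¹ +
      ((t - a) ^ j * (w - a))⁻¹) {a, t}ᶜ := by
  obtain ⟨n, rfl⟩ := Nat.exists_eq_add_of_le' hj
  have hpow : ∀ m : ℕ, IsExactOn (fun w => -((t - a) ^ (n - m))⁻¹ • (w - a) ^ (-(m + 2 : ℤ)))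
      {a, t}ᶜ := fun m =>
    ((isExactOn_zpow_sub a (by omega)).const_smul _).mono
      (compl_subset_compl.mpr (singleton_subset_iff.mpr (mem_insert a {t})))
  refine (IsExactOn.sum (Finset.range n) fun m _ => hpow m).congr fun w hw => ?_
  simp only [mem_compl_iff, mem_insert_iff, mem_singleton_iff, not_or] at hw
  have key := inv_pow_succ_mul_sub (sub_ne_zero.mpr hw.1) (sub_ne_zero.mpr hta)
    (by rw [sub_sub_sub_cancel_right]; exact sub_ne_zero.mpr hw.2) n
  rw [sub_sub_sub_cancel_right] at key
  have hterm : ∀ m ∈ Finset.range n, -((t - a) ^ (n - m))⁻¹ • (w - a) ^ (-(m + 2 : ℤ)) =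
      -((t - a) ^ (n - m) * (w - a) ^ (m + 2))⁻¹ := fun m _ => by
    rw [smul_eq_mul, mul_inv, zpow_neg, ← neg_mul]
    norm_cast
  beta_reduce
  rw [Finset.sum_congr rfl hterm, key, Finset.sum_neg_distrib]
  ring

theorem isExactOn_principalPart {a t : ℂ} (hta : t ≠ a) (k : ℕ) (α : ℕ → ℂ) {R : ℂ → ℂ}
    (hR : ∀ w, R w = ∑ j ∈ Finset.Icc 1 k, α j / (w - a) ^ j) :
    IsExactOn (fun w => (R w - R t) / (w - t) + R t / (w - a)) {a, t}ᶜ := by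
  refine (IsExactOn.sum (Finset.Icc 1 k) fun j hj =>
    (isExactOn_inv_pow_sub_mul_sub hta (Finset.mem_Icc.mp hj).1).const_smul (α j)).congr
    fun w _ => ?_
  simp only [hR, smul_eq_mul, ← Finset.sum_sub_distrib, Finset.sum_div, ← Finset.sum_add_distrib]
  refine Finset.sum_congr rfl fun j _ => ?_
  simp only [mul_inv, div_eq_mul_inv]
  ring

namespace PiecewiseC1

variable {γ γ' : ℝ → ℂ}

theorem intervalIntegrable_comp_mul (hγ : PiecewiseC1 γ γ') {h : ℂ → ℂ} {U : Set ℂ}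
    (hh : ContinuousOn h U) (hγU : MapsTo γ (Icc 0 1) U) :
    IntervalIntegrable (fun s => h (γ s) * γ' s) volume 0 1 := by
  apply hγ.2.1.continuousOn_mul
  rw [uIcc_of_le zero_le_one]
  exact hh.comp hγ.1 hγU

theorem intervalIntegrable_div_sub (hγ : PiecewiseC1 γ γ') {c : ℂ} (hc : c ∉ γ '' Icc 0 1) :
    IntervalIntegrable (fun s => γ' s / (γ s - c)) volume 0 1 := by
  have hcont : ContinuousOn (fun w => (w - c)⁻¹) {c}ᶜ :=
    (continuousOn_id.sub continuousOn_const).inv₀ fun w hw => sub_ne_zero.mpr hw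
  convert hγ.intervalIntegrable_comp_mul hcont fun s hs hsc => hc ⟨s, hs, hsc⟩ using 2 with s
  exact div_eq_inv_mul _ _

end PiecewiseC1

theorem Complex.IsExactOn.integral_comp_mul_eq_zero {f : ℂ → ℂ} {U : Set ℂ}
    (hf : IsExactOn f U) (hU : IsOpen U) {γ γ' : ℝ → ℂ} (hγ : PiecewiseC1 γ γ')
    (hclosed : γ 0 = γ 1) (hγU : MapsTo γ (Icc 0 1) U) :
    ∫ s in (0:ℝ)..1, f (γ s) * γ' s = 0 := by
  have hint := hγ.intervalIntegrable_comp_mul (hf.differentiableOn hU).continuousOn hγU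
  obtain ⟨F, hF⟩ := hf
  obtain ⟨hγc, -, S, hγd, -⟩ := hγ
  have hFγ : ContinuousOn (fun s => F (γ s)) (uIcc 0 1) := by
    rw [uIcc_of_le zero_le_one]
    have hFc : ContinuousOn F U := fun w hw => (hF w hw).continuousAt.continuousWithinAt
    exact hFc.comp hγc hγU
  have hderiv : ∀ s ∈ Ioo (min 0 1) (max 0 1) \ (S : Set ℝ),
      HasDerivAt (fun s => F (γ s)) (f (γ s) * γ' s) s := by
    rintro s ⟨hs, hsS⟩
    rw [min_eq_left zero_le_one, max_eq_right zero_le_one] at hs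
    have hγs : HasDerivAt γ (γ' s) s :=
      (hγd s ⟨Ioo_subset_Icc_self hs, hsS⟩).hasDerivAt (Icc_mem_nhds hs.1 hs.2)
    exact (hF (γ s) (hγU (Ioo_subset_Icc_self hs))).comp s hγs
  rw [integral_eq_of_hasDerivAt_off_countable _ _ S.countable_toSet hFγ hderiv hint, hclosed,
    sub_self]

theorem cauchyTypeIntegral_eq_of_isExactOn {ι : Type*} [Fintype ι] {γ γ' : ℝ → ℂ}
    (hγ : PiecewiseC1 γ γ') (hclosed : γ 0 = γ 1) {g : ℂ → ℂ} {t : ℂ}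
    (ht : t ∉ γ '' Icc 0 1) {z c : ι → ℂ} (hz : ∀ i, z i ∉ γ '' Icc 0 1) {U : Set ℂ}
    (hU : IsOpen U) (hγU : MapsTo γ (Icc 0 1) U)
    (hh : IsExactOn (fun w => (g w - g t) / (w - t) + ∑ i, c i / (w - z i)) U) :
    cauchyTypeIntegral γ γ' g t =
      windingNumber γ γ' t * g t - ∑ i, windingNumber γ γ' (z i) * c i := by
  set h : ℂ → ℂ := fun w => (g w - g t) / (w - t) + ∑ i, c i / (w - z i)
  have hsplit : (fun s => g (γ s) * γ' s / (γ s - t)) = fun s =>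
      h (γ s) * γ' s + g t * (γ' s / (γ s - t)) - ∑ i, c i * (γ' s / (γ s - z i)) := by
    funext s
    simp only [h, add_mul, Finset.sum_mul, div_mul_eq_mul_div, mul_div_assoc]
    ring
  have hWh := hγ.intervalIntegrable_comp_mul (hh.differentiableOn hU).continuousOn hγU
  have hWt := (hγ.intervalIntegrable_div_sub ht).const_mul (g t)
  have hWz := fun i => (hγ.intervalIntegrable_div_sub (hz i)).const_mul (c i)
  have hWsum : IntervalIntegrable (fun s => ∑ i, c i * (γ' s / (γ s - z i))) volume 0 1 := by
    simpa only [Finset.sum_fn] using IntervalIntegrable.sum Finset.univ fun i _ => hWz i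
  have hI : ∫ s in (0:ℝ)..1, g (γ s) * γ' s / (γ s - t) =
      g t * (∫ s in (0:ℝ)..1, γ' s / (γ s - t)) -
        ∑ i, c i * ∫ s in (0:ℝ)..1, γ' s / (γ s - z i) := by
    rw [hsplit, intervalIntegral.integral_sub (hWh.add hWt) hWsum,
      intervalIntegral.integral_add hWh hWt, hh.integral_comp_mul_eq_zero hU hγ hclosed hγU,
      intervalIntegral.integral_finsetSum fun i _ => hWz i]
    simp only [intervalIntegral.integral_const_mul, zero_add]
  rw [cauchyTypeIntegral, hI, mul_sub, Finset.mul_sum]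
  simp only [windingNumber]
  congr 1
  · ring
  · exact Finset.sum_congr rfl fun i _ => by ring

theorem isExactOn_div_sub_sub_add_sum_principalPart {ι : Type*} [Fintype ι] (z : ι → ℂ)
    (k : ι → ℕ) (α : ι → ℕ → ℂ) {g₀ : ℂ → ℂ} (hg₀ : Differentiable ℂ g₀) (R : ι → ℂ → ℂ)
    (hR : ∀ i w, R i w = ∑ j ∈ Finset.Icc 1 (k i), α i j / (w - z i) ^ j)
    {g : ℂ → ℂ} (hg : ∀ w, g w = g₀ w + ∑ i, R i w) {t : ℂ} (ht : ∀ i, t ≠ z i) :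
    IsExactOn (fun w => (g w - g t) / (w - t) + ∑ i, R i t / (w - z i))
      (insert t (range z))ᶜ := by
  refine (((hg₀.isExactOn_div_sub_sub t).mono ?_).add
    (IsExactOn.sum Finset.univ fun i _ =>
      (isExactOn_principalPart (ht i) (k i) (α i) (hR i)).mono ?_)).congr fun w _ => ?_
  · exact compl_subset_compl.mpr (singleton_subset_iff.mpr (mem_insert t _))
  · exact compl_subset_compl.mpr (insert_subset (mem_insert_of_mem _ (mem_range_self i))
      (singleton_subset_iff.mpr (mem_insert _ _)))
  · beta_reduce
    rw [Finset.sum_add_distrib, ← Finset.sum_div, Finset.sum_sub_distrib, hg, hg]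
    ring

theorem stmt1_general (l : ℕ) (z : Fin l → ℂ)
    (k : Fin l → ℕ) (α : Fin l → ℕ → ℂ) (g₀ : Polynomial ℂ)
    (R : Fin l → ℂ → ℂ)
    (hR : ∀ i w, R i w = ∑ j ∈ Finset.Icc 1 (k i), α i j / (w - z i) ^ j)
    (g : ℂ → ℂ) (hg : ∀ w, g w = g₀.eval w + ∑ i, R i w)
    (γ γ' : ℝ → ℂ) (hγ : PiecewiseC1 γ γ') (hclosed : γ 0 = γ 1)
    (havoid : ∀ i, z i ∉ γ '' Set.Icc 0 1)
    (t : ℂ) (ht : t ∉ γ '' Set.Icc 0 1) (ht' : ∀ i, t ≠ z i) :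
    cauchyTypeIntegral γ γ' g t =
      windingNumber γ γ' t * g t - ∑ i, windingNumber γ γ' (z i) * R i t := by
  have hγU : MapsTo γ (Icc 0 1) (insert t (range z))ᶜ := by
    rintro s hs (hst | ⟨i, hzs⟩)
    · exact ht ⟨s, hs, hst⟩
    · exact havoid i ⟨s, hs, hzs.symm⟩
  exact cauchyTypeIntegral_eq_of_isExactOn hγ hclosed ht havoid
    ((finite_range z).insert t).isClosed.isOpen_compl hγU
    (isExactOn_div_sub_sub_add_sum_principalPart z k α g₀.differentiable R hR hg ht')

theorem stmt1 (l : ℕ) (z : Fin l → ℂ) (hz : Function.Injective z)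
    (k : Fin l → ℕ) (hk : ∀ i, 1 ≤ k i) (α : Fin l → ℕ → ℂ) (g₀ : Polynomial ℂ)
    (R : Fin l → ℂ → ℂ)
    (hR : ∀ i w, R i w = ∑ j ∈ Finset.Icc 1 (k i), α i j / (w - z i) ^ j)
    (g : ℂ → ℂ) (hg : ∀ w, g w = g₀.eval w + ∑ i, R i w)
    (γ γ' : ℝ → ℂ) (hγ : PiecewiseC1 γ γ') (hclosed : γ 0 = γ 1)
    (havoid : ∀ i, z i ∉ γ '' Set.Icc 0 1)
    (t : ℂ) (ht : t ∉ γ '' Set.Icc 0 1) (ht' : ∀ i, t ≠ z i) :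
    cauchyTypeIntegral γ γ' g t =
      windingNumber γ γ' t * g t - ∑ i, windingNumber γ γ' (z i) * R i t :=
  stmt1_general l z k α g₀ R hR g hg γ γ' hγ hclosed havoid t ht ht'
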